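/- arXiv:1704.00249 — 3 statements merged into one kernel-verified Lean document; each statement's English description precedes it below -/
import Mathlib

section
/- Let t, n ≥ 1 and let P_1, …, P_t be convex subsets of ℝ^n. For each j = 1, …, t let e_j ∈ ℝ^t denote the j-th standard basis vector, let R_j = {e_j} × P_j ⊆ ℝ^t × ℝ^n, and let R be the convex hull of R_1 ∪ ⋯ ∪ R_t. Then for every x ∈ ℤ^n: x belongs to P_1 ∪ ⋯ ∪ P_t if and only if there exists τ ∈ ℤ^t such that (τ, x) ∈ R. -/
/-!
Grouping the points of a convex combination according to the convex set `{e_j} × P_j` they come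
from, every point of the lift `R` has the form `(w, ∑ w_j z_j)` with `w` in the standard simplex
and `z_j ∈ P_j` whenever `w_j ≠ 0`. An integer point of the standard simplex is a vertex `e_j`,
so `(τ, x) ∈ R` with `τ` integral forces `x = z_j ∈ P_j`.
-/

open Finset Set

variable {R E F ι : Type*} [Field R] [LinearOrder R] [IsStrictOrderedRing R]
  [AddCommGroup E] [Module R E] [AddCommGroup F] [Module R F]

theorem Finset.sum_smul_centerMass_of_nonneg {t : Finset ι} {w : ι → R} (z : ι → E)
    (hw : ∀ i ∈ t, 0 ≤ w i) : (∑ i ∈ t, w i) • t.centerMass w z = ∑ i ∈ t, w i • z i := by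
  rcases (sum_nonneg hw).eq_or_lt with h | h
  · have hw0 : ∀ i ∈ t, w i = 0 := (sum_eq_zero_iff_of_nonneg hw).1 h.symm
    rw [← h, zero_smul, sum_eq_zero fun i hi => by rw [hw0 i hi, zero_smul]]
  · exact smul_inv_smul₀ h.ne' _

theorem exists_sum_smul_eq_of_mem_convexHull_iUnion [Fintype ι] {S : ι → Set E}
    (hS : ∀ i, Convex R (S i)) {p : E} (hp : p ∈ convexHull R (⋃ i, S i)) :
    ∃ w ∈ stdSimplex R ι, ∃ z : ι → E, (∀ i, w i ≠ 0 → z i ∈ S i) ∧ ∑ i, w i • z i = p := by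
  classical
  obtain ⟨κ, _, v, y, hv0, hv1, hy, rfl⟩ := mem_convexHull_iff_exists_fintype.1 hp
  choose J hJ using fun k => mem_iUnion.1 (hy k)
  have hw0 : ∀ i, 0 ≤ ∑ k with J k = i, v k := fun i => sum_nonneg fun k _ => hv0 k
  refine ⟨fun i => ∑ k with J k = i, v k, ⟨hw0, (sum_fiberwise _ J v).trans hv1⟩,
    fun i => ({k | J k = i} : Finset κ).centerMass v y, fun i hi => ?_, ?_⟩
  · refine (hS i).centerMass_mem (fun k _ => hv0 k) ((hw0 i).lt_of_ne' hi) fun k hk => ?_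
    exact (mem_filter.1 hk).2 ▸ hJ k
  · simp_rw [sum_smul_centerMass_of_nonneg y fun k _ => hv0 k]
    exact sum_fiberwise _ J _

theorem exists_sum_smul_eq_of_mem_convexHull_iUnion_single_prod [Fintype ι] [DecidableEq ι]
    {P : ι → Set F} (hP : ∀ j, Convex R (P j)) {p : (ι → R) × F}
    (hp : p ∈ convexHull R (⋃ j, ({Pi.single j 1} : Set (ι → R)) ×ˢ P j)) :
    p.1 ∈ stdSimplex R ι ∧ ∃ z : ι → F, (∀ j, p.1 j ≠ 0 → z j ∈ P j) ∧ ∑ j, p.1 j • z j = p.2 := by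
  obtain ⟨w, hw, z, hz, rfl⟩ :=
    exists_sum_smul_eq_of_mem_convexHull_iUnion (fun j => (convex_singleton _).prod (hP j)) hp
  have hsingle : ∀ j, w j • (z j).1 = Pi.single j (w j) := fun j => by
    by_cases h : w j = 0
    · simp [h]
    · rw [mem_singleton_iff.1 (hz j h).1, ← Pi.single_smul', smul_eq_mul, mul_one]
  have hfst : (∑ j, w j • z j).1 = w := by
    simp_rw [Prod.fst_sum, Prod.smul_fst, hsingle, univ_sum_single]
  rw [hfst]
  exact ⟨hw, fun j => (z j).2, fun j hj => (hz j hj).2, by simp [Prod.snd_sum]⟩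

theorem exists_eq_single_of_intCast_mem_stdSimplex [Fintype ι] [DecidableEq ι] {τ : ι → ℤ}
    (h : (fun i => (τ i : R)) ∈ stdSimplex R ι) : ∃ j, (fun i => (τ i : R)) = Pi.single j 1 := by
  have h0 : ∀ i, 0 ≤ τ i := fun i => Int.cast_nonneg_iff.1 (h.1 i)
  have h1 : ∑ i, τ i = 1 := by
    have h1 : ∑ i, (τ i : R) = 1 := h.2
    exact_mod_cast h1
  obtain ⟨j, hj⟩ : ∃ j, τ j ≠ 0 := by
    by_contra! hτ
    simp [hτ] at h1
  have hτj : τ j = 1 :=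
    le_antisymm (h1 ▸ single_le_sum (fun i _ => h0 i) (mem_univ j)) ((h0 j).lt_of_ne' hj)
  have hrest : ∀ i ∈ univ.erase j, τ i = 0 := by
    refine (sum_eq_zero_iff_of_nonneg fun i _ => h0 i).1 ?_
    linarith [add_sum_erase univ τ (mem_univ j)]
  refine ⟨j, funext fun i => ?_⟩
  by_cases hij : i = j
  · simp [hij, hτj]
  · simp [hij, hrest i (mem_erase.2 ⟨hij, mem_univ i⟩)]

theorem union_eq_integer_projection_of_lift_general
    (t n : ℕ)
    (P : Fin t → Set (Fin n → ℝ)) (hP : ∀ j, Convex ℝ (P j))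
    (R : Set ((Fin t → ℝ) × (Fin n → ℝ)))
    (hR : R = convexHull ℝ (⋃ j, ({Pi.single j (1 : ℝ)} : Set (Fin t → ℝ)) ×ˢ P j)) :
    ∀ x : Fin n → ℝ, (∀ i, ∃ z : ℤ, x i = (z : ℝ)) →
      ((x ∈ ⋃ j, P j) ↔
        ∃ τ : Fin t → ℤ, ((fun j => (τ j : ℝ)), x) ∈ R) := by
  subst hR
  intro x _
  constructor
  · rintro ⟨_, ⟨j, rfl⟩, hx⟩
    refine ⟨Pi.single j 1, subset_convexHull ℝ _ (mem_iUnion.2 ⟨j, ?_, hx⟩)⟩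
    ext k
    by_cases hk : k = j <;> simp [hk]
  · rintro ⟨τ, hτ⟩
    obtain ⟨hsimplex, z, hz, hx⟩ := exists_sum_smul_eq_of_mem_convexHull_iUnion_single_prod hP hτ
    obtain ⟨j, hj⟩ := exists_eq_single_of_intCast_mem_stdSimplex hsimplex
    simp only [congrFun hj] at hz hx
    rw [← hx, Fintype.sum_eq_single j fun k hk => by simp [hk]]
    exact mem_iUnion.2 ⟨j, by simpa using hz j (by simp)⟩

/-- A union of convex sets `P_1, …, P_t ⊆ ℝ^n` contains an integer
point `x` iff the lifted polytope `R = conv({e_1} × P_1 ∪ ⋯ ∪ {e_t} × P_t)`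
contains an integer point `(τ, x)`. -/
theorem union_eq_integer_projection_of_lift
    (t n : ℕ) (ht : 1 ≤ t) (hn : 1 ≤ n)
    (P : Fin t → Set (Fin n → ℝ)) (hP : ∀ j, Convex ℝ (P j))
    (R : Set ((Fin t → ℝ) × (Fin n → ℝ)))
    (hR : R = convexHull ℝ (⋃ j, ({Pi.single j (1 : ℝ)} : Set (Fin t → ℝ)) ×ˢ P j)) :
    ∀ x : Fin n → ℝ, (∀ i, ∃ z : ℤ, x i = (z : ℝ)) →
      ((x ∈ ⋃ j, P j) ↔
        ∃ τ : Fin t → ℤ, ((fun j => (τ j : ℝ)), x) ∈ R) :=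
  union_eq_integer_projection_of_lift_general t n P hP R hR
end

section
/- Let a, n, t ≥ 1, let r_1, …, r_t be pairwise distinct vectors in {0,1}^a ⊆ ℝ^a, and let P_1, …, P_t be convex subsets of ℝ^n. Let R_j = {r_j} × P_j ⊆ ℝ^a × ℝ^n and let R be the convex hull of R_1 ∪ ⋯ ∪ R_t. Then for every point y ∈ ℤ^{a+n}: y ∈ R if and only if y ∈ R_j for some j with 1 ≤ j ≤ t. In other words, R ∩ ℤ^{a+n} = (R_1 ∩ ℤ^{a+n}) ∪ ⋯ ∪ (R_t ∩ ℤ^{a+n}). -/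
/-!
A point of `R` has first coordinate in `conv {r_j}`, which lies in the unit cube; if that
coordinate is integral, it is a vertex of the cube, hence an extreme point. The fibre of the
projection over an extreme point is an extreme set, and a convex hull meets an extreme set in the
convex hull of the generators lying in it. Since the `r_j` are distinct, those generators all lie
in one piece `{r_j} × P_j`, which is convex.
-/

open Set Function

section OrderedSemiring

variable {𝕜 E F ι : Type*} [Semiring 𝕜] [PartialOrder 𝕜]
  [AddCommMonoid E] [Module 𝕜 E] [AddCommMonoid F] [Module 𝕜 F]

theorem IsExtreme.preimage_linearMap {C D : Set F} (h : IsExtreme 𝕜 C D) (f : E →ₗ[𝕜] F) :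
    IsExtreme 𝕜 (f ⁻¹' C) (f ⁻¹' D) := by
  refine ⟨preimage_mono h.subset, fun x₁ hx₁ x₂ hx₂ x hx hxs ↦ ?_⟩
  obtain ⟨a, b, ha, hb, hab, rfl⟩ := hxs
  exact h.left_mem_of_mem_openSegment hx₁ hx₂ hx ⟨a, b, ha, hb, hab, by simp⟩

theorem fst_mem_convexHull_range_of_mem_convexHull_iUnion {r : ι → E} {P : ι → Set F}
    {y : E × F} (hy : y ∈ convexHull 𝕜 (⋃ j, ({r j} : Set E) ×ˢ P j)) :
    y.1 ∈ convexHull 𝕜 (range r) :=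
  convexHull_min (iUnion_subset fun j x (hx : x ∈ ({r j} : Set E) ×ˢ P j) ↦
    subset_convexHull 𝕜 (range r) ⟨j, hx.1.symm⟩)
    ((convex_convexHull 𝕜 _).linear_preimage (LinearMap.fst 𝕜 E F)) hy

end OrderedSemiring

section LinearOrderedField

variable {𝕜 E F ι : Type*} [Field 𝕜] [LinearOrder 𝕜] [IsStrictOrderedRing 𝕜]
  [AddCommGroup E] [Module 𝕜 E] [AddCommGroup F] [Module 𝕜 F]

theorem IsExtreme.convexHull_inter_subset {A B S : Set E} (hA : Convex 𝕜 A)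
    (hAB : IsExtreme 𝕜 A B) (hSA : S ⊆ A) :
    convexHull 𝕜 S ∩ B ⊆ convexHull 𝕜 (S ∩ B) := by
  rintro y ⟨hyS, hyB⟩
  have hSB : convexHull 𝕜 (S \ B) ⊆ A \ B :=
    convexHull_min (sdiff_subset_sdiff_left hSA) (hAB.convex_sdiff hA)
  rcases (S ∩ B).eq_empty_or_nonempty with hin | hin
  · rw [← sdiff_self_inter, hin, sdiff_empty] at hSB
    exact absurd hyB (hSB hyS).2
  rcases (S \ B).eq_empty_or_nonempty with hout | hout
  · rwa [inter_eq_left.2 (sdiff_eq_empty.1 hout)]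
  -- `y` lies on a segment from `conv (S ∩ B)` to `conv (S \ B) ⊆ A \ B`, and, being in the
  -- extreme set `B`, it can only be the endpoint in `conv (S ∩ B)`.
  rw [← inter_union_sdiff S B, convexHull_union hin hout] at hyS
  obtain ⟨p, hp, q, hq, hypq⟩ := mem_convexJoin.1 hyS
  have hpA : p ∈ A := convexHull_min (inter_subset_left.trans hSA) hA hp
  rw [← insert_endpoints_openSegment] at hypq
  rcases hypq with rfl | rfl | hypq
  · exact hp
  · exact absurd hyB (hSB hq).2
  · exact absurd (hAB.right_mem_of_mem_openSegment hpA (hSB hq).1 hyB hypq) (hSB hq).2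

theorem exists_mem_of_mem_convexHull_iUnion_of_fst_mem_extremePoints {r : ι → E}
    (hr : Injective r) {P : ι → Set F} (hP : ∀ j, Convex 𝕜 (P j)) {C : Set E}
    (hC : Convex 𝕜 C) (hrC : ∀ j, r j ∈ C) {y : E × F}
    (hy : y ∈ convexHull 𝕜 (⋃ j, ({r j} : Set E) ×ˢ P j)) (hy₁ : y.1 ∈ C.extremePoints 𝕜) :
    ∃ j, y ∈ ({r j} : Set E) ×ˢ P j := by
  have hext : IsExtreme 𝕜 (Prod.fst ⁻¹' C : Set (E × F)) (Prod.fst ⁻¹' {y.1}) :=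
    (isExtreme_singleton.2 hy₁).preimage_linearMap (LinearMap.fst 𝕜 E F)
  have hSC : (⋃ j, ({r j} : Set E) ×ˢ P j) ⊆ Prod.fst ⁻¹' C :=
    iUnion_subset fun j x hx ↦ show x.1 ∈ C from (mem_singleton_iff.1 hx.1).symm ▸ hrC j
  have hy' := hext.convexHull_inter_subset (hC.linear_preimage (LinearMap.fst 𝕜 E F)) hSC
    ⟨hy, rfl⟩
  obtain ⟨z, hzS, hz₁⟩ := convexHull_nonempty_iff.1 ⟨y, hy'⟩
  obtain ⟨j, hz⟩ := mem_iUnion.1 hzS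
  refine ⟨j, convexHull_min ?_ ((convex_singleton _).prod (hP j)) hy'⟩
  rintro x ⟨hxS, hx₁⟩
  obtain ⟨k, hx⟩ := mem_iUnion.1 hxS
  obtain rfl : k = j := hr <| by
    rw [← mem_singleton_iff.1 hx.1, ← mem_singleton_iff.1 hz.1]
    exact hx₁.trans hz₁.symm
  exact hx

end LinearOrderedField

theorem mem_extremePoints_pi_Icc_zero_one {ι : Type*} {x : ι → ℝ}
    (hx : x ∈ univ.pi fun _ ↦ Icc (0 : ℝ) 1) (hint : ∀ i, ∃ z : ℤ, x i = z) :
    x ∈ extremePoints ℝ (univ.pi fun _ : ι ↦ Icc (0 : ℝ) 1) := by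
  rw [extremePoints_pi]
  intro i _
  obtain ⟨z, hz⟩ := hint i
  have hz01 : (0 : ℝ) ≤ z ∧ (z : ℝ) ≤ 1 := hz ▸ hx i (mem_univ i)
  norm_cast at hz01
  obtain ⟨hz0, hz1⟩ := hz01
  rw [extremePoints_Icc zero_le_one, hz]
  interval_cases z <;> simp

theorem integer_points_of_cube_lift_general
    (a n t : ℕ)
    (r : Fin t → (Fin a → ℝ)) (hr01 : ∀ j i, r j i = 0 ∨ r j i = 1)
    (hrdist : Function.Injective r)
    (P : Fin t → Set (Fin n → ℝ)) (hP : ∀ j, Convex ℝ (P j))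
    (R : Set ((Fin a → ℝ) × (Fin n → ℝ)))
    (hR : R = convexHull ℝ (⋃ j, ({r j} : Set (Fin a → ℝ)) ×ˢ P j)) :
    ∀ y : (Fin a → ℝ) × (Fin n → ℝ),
      (∀ i, ∃ z : ℤ, y.1 i = (z : ℝ)) → (∀ i, ∃ z : ℤ, y.2 i = (z : ℝ)) →
        (y ∈ R ↔ ∃ j, y ∈ ({r j} : Set (Fin a → ℝ)) ×ˢ P j) := by
  intro y hy₁ _
  subst hR
  refine ⟨fun hyR ↦ ?_, fun ⟨j, hj⟩ ↦ subset_convexHull ℝ _ (mem_iUnion.2 ⟨j, hj⟩)⟩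
  have hcube : Convex ℝ (univ.pi fun _ : Fin a ↦ Icc (0 : ℝ) 1) :=
    convex_pi fun _ _ ↦ convex_Icc 0 1
  have hrC : ∀ j, r j ∈ univ.pi fun _ ↦ Icc (0 : ℝ) 1 := fun j i _ ↦ by
    rcases hr01 j i with h | h <;> simp [h]
  have hyC : y.1 ∈ univ.pi fun _ ↦ Icc (0 : ℝ) 1 :=
    convexHull_min (range_subset_iff.2 hrC) hcube
      (fst_mem_convexHull_range_of_mem_convexHull_iUnion hyR)
  exact exists_mem_of_mem_convexHull_iUnion_of_fst_mem_extremePoints hrdist hP hcube hrC hyR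
    (mem_extremePoints_pi_Icc_zero_one hyC hy₁)

/-- If `r_1, …, r_t` are pairwise distinct 0/1-vectors in `ℝ^a` and
`P_1, …, P_t ⊆ ℝ^n` are convex, then the integer points of
`R = conv({r_1} × P_1 ∪ ⋯ ∪ {r_t} × P_t)` are exactly the integer points of the
pieces `{r_j} × P_j`. -/
theorem integer_points_of_cube_lift
    (a n t : ℕ) (ha : 1 ≤ a) (hn : 1 ≤ n) (ht : 1 ≤ t)
    (r : Fin t → (Fin a → ℝ)) (hr01 : ∀ j i, r j i = 0 ∨ r j i = 1)
    (hrdist : Function.Injective r)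
    (P : Fin t → Set (Fin n → ℝ)) (hP : ∀ j, Convex ℝ (P j))
    (R : Set ((Fin a → ℝ) × (Fin n → ℝ)))
    (hR : R = convexHull ℝ (⋃ j, ({r j} : Set (Fin a → ℝ)) ×ˢ P j)) :
    ∀ y : (Fin a → ℝ) × (Fin n → ℝ),
      (∀ i, ∃ z : ℤ, y.1 i = (z : ℝ)) → (∀ i, ∃ z : ℤ, y.2 i = (z : ℝ)) →
        (y ∈ R ↔ ∃ j, y ∈ ({r j} : Set (Fin a → ℝ)) ×ˢ P j) :=
  integer_points_of_cube_lift_general a n t r hr01 hrdist P hP R hR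
end

section
/- Fix n ≥ 1 and let m ≥ 2^n. Let A be a rational m × n matrix and b ∈ ℚ^m. Then the system A x ≤ b has a solution x ∈ ℤ^n if and only if for every subset I of the row indices {1, …, m} with |I| = 2^n, the subsystem consisting of the rows indexed by I (i.e. (A x)_i ≤ b_i for all i ∈ I) has a solution x ∈ ℤ^n. -/
/-!
Doignon's argument. Take an infeasible integer system on more than `2^n` rows all of whose
one-row deletions are feasible, and raise its right-hand side `c` to a maximal infeasible one.
Then raising any single `c i` by one makes the system feasible, which gives integer points
`z i` with `(A z i) i = c i + 1` satisfying every other row. By pigeonhole two of them,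
`z i` and `z j`, agree modulo `2`, and their midpoint is an integer point satisfying all
rows with right-hand side `c`, a contradiction. Rational systems reduce to integer ones by
scaling each row by a positive common denominator and rounding the right-hand side down.
-/

open Finset Function Matrix

variable {ι κ : Type*} [Fintype κ]

def IntFeasible (A : Matrix ι κ ℤ) (b : ι → ℤ) (s : Finset ι) : Prop :=
  ∃ x : κ → ℤ, ∀ i ∈ s, (A *ᵥ x) i ≤ b i

lemma exists_ne_add_eq_two_smul (z : ι → κ → ℤ) {s : Finset ι}
    (hs : 2 ^ Fintype.card κ < s.card) :
    ∃ i ∈ s, ∃ j ∈ s, i ≠ j ∧ ∃ w : κ → ℤ, z i + z j = 2 • w := by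
  classical
  have hcard : (univ : Finset (κ → ZMod 2)).card < s.card := by
    simpa [Fintype.card_fun] using hs
  obtain ⟨i, hi, j, hj, hij, hparity⟩ := exists_ne_map_eq_of_card_lt_of_maps_to hcard
    (f := fun i l => (z i l : ZMod 2)) fun _ _ => mem_coe.2 (mem_univ _)
  have hdvd : ∀ l, (2 : ℤ) ∣ z i l - z j l := fun l =>
    (ZMod.intCast_eq_intCast_iff_dvd_sub _ _ 2).1 (congrFun hparity l).symm
  choose d hd using hdvd
  refine ⟨i, hi, j, hj, hij, z j + d, funext fun l => ?_⟩
  simp only [Pi.add_apply, Pi.smul_apply, two_nsmul]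
  linarith [hd l]

section Doignon

variable [DecidableEq ι] (A : Matrix ι κ ℤ)

lemma exists_tight_of_not_intFeasible_of_intFeasible_update {c : ι → ℤ} {s : Finset ι}
    {i : ι} (hi : i ∈ s) (hc : ¬ IntFeasible A c s)
    (hc' : IntFeasible A (update c i (c i + 1)) s) :
    ∃ z, (A *ᵥ z) i = c i + 1 ∧ ∀ k ∈ s.erase i, (A *ᵥ z) k ≤ c k := by
  obtain ⟨z, hz⟩ := hc'
  have hother : ∀ k ∈ s.erase i, (A *ᵥ z) k ≤ c k := fun k hk => by
    simpa [update_of_ne (ne_of_mem_erase hk)] using hz k (mem_of_mem_erase hk)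
  have hlt : c i < (A *ᵥ z) i := by
    by_contra! hle
    refine hc ⟨z, fun k hk => ?_⟩
    rcases eq_or_ne k i with rfl | hki
    · exact hle
    · exact hother k (mem_erase.2 ⟨hki, hk⟩)
  have hle : (A *ᵥ z) i ≤ c i + 1 := by simpa using hz i hi
  exact ⟨z, by omega, hother⟩

-- `2 (A w)_k = (A z)_k + (A z')_k`, and at most one of the two summands exceeds `c k`, by one.
lemma intFeasible_of_tight_pair {c : ι → ℤ} {s : Finset ι} {i j : ι} (hij : i ≠ j)
    (hi : i ∈ s) (hj : j ∈ s) {z z' w : κ → ℤ}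
    (hz : (A *ᵥ z) i = c i + 1 ∧ ∀ k ∈ s.erase i, (A *ᵥ z) k ≤ c k)
    (hz' : (A *ᵥ z') j = c j + 1 ∧ ∀ k ∈ s.erase j, (A *ᵥ z') k ≤ c k)
    (hw : z + z' = 2 • w) :
    IntFeasible A c s := by
  refine ⟨w, fun k hk => ?_⟩
  have hsum : (A *ᵥ z) k + (A *ᵥ z') k = 2 * (A *ᵥ w) k := by
    have := congrFun (congrArg (A *ᵥ ·) hw) k
    simpa only [mulVec_add, mulVec_smul, Pi.add_apply, Pi.smul_apply, two_nsmul, two_mul]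
      using this
  rcases eq_or_ne k i with rfl | hki
  · have := hz'.2 k (mem_erase.2 ⟨hij, hi⟩)
    omega
  rcases eq_or_ne k j with rfl | hkj
  · have := hz.2 k (mem_erase.2 ⟨hij.symm, hj⟩)
    omega
  have := hz.2 k (mem_erase.2 ⟨hki, hk⟩)
  have := hz'.2 k (mem_erase.2 ⟨hkj, hk⟩)
  omega

lemma card_le_of_not_intFeasible_of_intFeasible_update {c : ι → ℤ} {s : Finset ι}
    (hc : ¬ IntFeasible A c s) (hup : ∀ i ∈ s, IntFeasible A (update c i (c i + 1)) s) :
    s.card ≤ 2 ^ Fintype.card κ := by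
  by_contra! hs
  have htight : ∀ i ∈ s, ∃ z, (A *ᵥ z) i = c i + 1 ∧ ∀ k ∈ s.erase i, (A *ᵥ z) k ≤ c k :=
    fun i hi => exists_tight_of_not_intFeasible_of_intFeasible_update A hi hc (hup i hi)
  choose! z hz using htight
  obtain ⟨i, hi, j, hj, hij, w, hw⟩ := exists_ne_add_eq_two_smul z hs
  exact hc (intFeasible_of_tight_pair A hij hi hj (hz i hi) (hz j hj) hw)

variable [Fintype ι]

lemma exists_maximal_not_intFeasible {b : ι → ℤ} {s : Finset ι} (hb : ¬ IntFeasible A b s)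
    (herase : ∀ i ∈ s, IntFeasible A b (s.erase i)) :
    ∃ c, ¬ IntFeasible A c s ∧ ∀ i ∈ s, IntFeasible A (update c i (c i + 1)) s := by
  classical
  choose! y hy using herase
  -- the point `y i` is ruled out only by row `i`, which caps `c i` for every infeasible `c ≥ b`
  have hbound : ∀ c, b ≤ c → ¬ IntFeasible A c s → ∀ i ∈ s, c i < (A *ᵥ y i) i := by
    intro c hbc hc i hi
    by_contra! hle
    refine hc ⟨y i, fun k hk => ?_⟩
    rcases eq_or_ne k i with rfl | hki
    · exact hle
    · exact (hy i hi k (mem_erase.2 ⟨hki, hk⟩)).trans (hbc k)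
  set S := (Icc b fun i => max (b i) ((A *ᵥ y i) i - 1)).filter (¬ IntFeasible A · s)
  obtain ⟨c, hcS, hmax⟩ := exists_max_image S (fun c => ∑ i ∈ s, c i)
    ⟨b, mem_filter.2 ⟨left_mem_Icc.2 fun i => le_max_left _ _, hb⟩⟩
  obtain ⟨⟨hbc, hcu⟩, hc⟩ := And.imp_left mem_Icc.1 (mem_filter.1 hcS)
  refine ⟨c, hc, fun i hi => ?_⟩
  by_contra hc'
  set c' := update c i (c i + 1)
  have hcc' : c ≤ c' := le_update_self_iff.2 (Int.le_add_one le_rfl)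
  have hc'S : c' ∈ S := by
    refine mem_filter.2 ⟨mem_Icc.2 ⟨hbc.trans hcc', fun k => ?_⟩, hc'⟩
    rcases eq_or_ne k i with rfl | hki
    · have := hbound c' (hbc.trans hcc') hc' k hi
      simp only [c', update_self] at this ⊢
      exact le_max_of_le_right (by omega)
    · simpa [c', update_of_ne hki] using hcu k
  have hsum : ∑ k ∈ s, c k < ∑ k ∈ s, c' k :=
    sum_lt_sum (fun k _ => hcc' k) ⟨i, hi, by simp [c']⟩
  exact (hmax c' hc'S).not_gt hsum

theorem intFeasible_of_forall_card_le {b : ι → ℤ} {s : Finset ι}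
    (h : ∀ t ⊆ s, t.card ≤ 2 ^ Fintype.card κ → IntFeasible A b t) :
    IntFeasible A b s := by
  induction s using Finset.strongInduction with
  | H s ih =>
    by_cases hs : s.card ≤ 2 ^ Fintype.card κ
    · exact h s Subset.rfl hs
    by_contra hb
    have herase : ∀ i ∈ s, IntFeasible A b (s.erase i) := fun i hi =>
      ih _ (erase_ssubset hi) fun t ht => h t (ht.trans (erase_subset i s))
    obtain ⟨c, hc, hup⟩ := exists_maximal_not_intFeasible A hb herase
    exact hs (card_le_of_not_intFeasible_of_intFeasible_update A hc hup)

end Doignon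

lemma Rat.exists_pos_nat_mul_eq_intCast (q : κ → ℚ) :
    ∃ d : ℕ, 0 < d ∧ ∀ j, ∃ a : ℤ, q j * d = a := by
  classical
  refine ⟨∏ j, (q j).den, prod_pos fun j _ => (q j).den_pos, fun j => ?_⟩
  refine ⟨(q j).num * ∏ l ∈ univ.erase j, ((q l).den : ℤ), ?_⟩
  rw [← mul_prod_erase univ _ (mem_univ j)]
  push_cast
  rw [← mul_assoc, Rat.mul_den_eq_num]

lemma exists_int_dotProduct_le_iff (a : κ → ℚ) (β : ℚ) :
    ∃ (a' : κ → ℤ) (β' : ℤ), ∀ x : κ → ℤ,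
      a ⬝ᵥ (fun j => (x j : ℚ)) ≤ β ↔ a' ⬝ᵥ x ≤ β' := by
  obtain ⟨d, hd, ha⟩ := Rat.exists_pos_nat_mul_eq_intCast a
  choose a' ha' using ha
  refine ⟨a', ⌊β * d⌋, fun x => ?_⟩
  have hscale : ((a' ⬝ᵥ x : ℤ) : ℚ) = a ⬝ᵥ (fun j => (x j : ℚ)) * d := by
    simp only [dotProduct, Int.cast_sum, Int.cast_mul, sum_mul, ← ha']
    exact sum_congr rfl fun j _ => by ring
  rw [Int.le_floor, hscale, mul_le_mul_iff_of_pos_right (by exact_mod_cast hd)]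

lemma exists_int_mulVec_le_iff (A : Matrix ι κ ℚ) (b : ι → ℚ) :
    ∃ (A' : Matrix ι κ ℤ) (b' : ι → ℤ), ∀ (x : κ → ℤ) (i : ι),
      (A *ᵥ fun j => (x j : ℚ)) i ≤ b i ↔ (A' *ᵥ x) i ≤ b' i := by
  choose A' b' h using fun i => exists_int_dotProduct_le_iff (A i) (b i)
  exact ⟨A', b', fun x i => h i x⟩

theorem integer_solvable_iff_all_short_subsystems_general
    (n m : ℕ) (hm : 2 ^ n ≤ m)
    (A : Matrix (Fin m) (Fin n) ℚ) (b : Fin m → ℚ) :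
    (∃ x : Fin n → ℤ, ∀ i, A.mulVec (fun j => (x j : ℚ)) i ≤ b i) ↔
      (∀ I : Finset (Fin m), I.card = 2 ^ n →
        ∃ x : Fin n → ℤ, ∀ i ∈ I, A.mulVec (fun j => (x j : ℚ)) i ≤ b i) := by
  refine ⟨fun ⟨x, hx⟩ _ _ => ⟨x, fun i _ => hx i⟩, fun h => ?_⟩
  obtain ⟨A', b', hAb⟩ := exists_int_mulVec_le_iff A b
  have hshort : ∀ t : Finset (Fin m), t.card ≤ 2 ^ n → IntFeasible A' b' t := fun t ht => by
    obtain ⟨I, htI, hI⟩ := exists_superset_card_eq ht (by simpa using hm)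
    obtain ⟨x, hx⟩ := h I hI
    exact ⟨x, fun i hi => (hAb x i).1 (hx i (htI hi))⟩
  obtain ⟨x, hx⟩ := intFeasible_of_forall_card_le A' (s := univ)
    fun t _ ht => hshort t (by simpa using ht)
  exact ⟨x, fun i => (hAb x i).2 (hx i (mem_univ i))⟩

/-- Doignon–Bell–Scarf reduction: For fixed `n ≥ 1` and
`m ≥ 2^n`, a system `A x ≤ b` of `m` rational inequalities in `n` integer
variables is solvable iff every subsystem of `2^n` of the inequalities is. -/
theorem integer_solvable_iff_all_short_subsystems
    (n m : ℕ) (hn : 1 ≤ n) (hm : 2 ^ n ≤ m)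
    (A : Matrix (Fin m) (Fin n) ℚ) (b : Fin m → ℚ) :
    (∃ x : Fin n → ℤ, ∀ i, A.mulVec (fun j => (x j : ℚ)) i ≤ b i) ↔
      (∀ I : Finset (Fin m), I.card = 2 ^ n →
        ∃ x : Fin n → ℤ, ∀ i ∈ I, A.mulVec (fun j => (x j : ℚ)) i ≤ b i) :=
  integer_solvable_iff_all_short_subsystems_general n m hm A b
end
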